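/- arXiv:2403.00958 — 2 statements merged into one kernel-verified Lean document; each statement's English description precedes it below -/
import Mathlib

section
/- Let P be a connected, non-separable type-C poset of height (1,1) such that the relation graph RG(P) contains a self-loop. Then there exists a connected type-C poset P' of height (0,1) such that |V(P)| = |V(P')|, |E(P)| = |E(P')|, RG(P') contains a self-loop, and ind g_C(P) = ind g_C(P'). -/
/-!
Let `S` be the set of non-maximal elements of `P⁺`. Since `P` has height one, nothing lies below
an element of `S`, so a relation `i ≺ j` inside `P⁺` has `i ∈ S`, `j ∉ S`, and every relation
`-i ≺ j` has `i, j ∉ S`. Conjugation by the signed permutation matrix exchanging `e_i` and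
`e_{-i}` for `i ∈ S` thus sends `D_i` to `±D_i` and `R_{i,j}` (for `i ≺ j`) to `-R^±_{i,j}`, and
fixes the other generators: it maps `g_C(P)` onto `g_C(P')`, where the strict relations of `P'`
are the `-i ≺ j` for the edges `{i, j}` of `RG(P)`. So `RG(P')` is `RG(P)` with every edge made
non-dashed, which keeps connectedness, the number of edges and the self-loop.
-/

open scoped DirectSum

namespace LiePoset

/-- A type-C poset on the ground set `{-n, …, -1, 1, …, n} ⊆ ℤ`:
a partial order `le` supported on that set such that `i ≼ j` implies `i ≤ j` in `ℤ`,
and for `i ≠ -j`, `i ≼ j ↔ -j ≼ -i`. -/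
structure TypeCPoset (n : ℕ) where
  le : ℤ → ℤ → Prop
  supp : ∀ ⦃i j : ℤ⦄, le i j → i ≠ 0 ∧ |i| ≤ (n : ℤ) ∧ j ≠ 0 ∧ |j| ≤ (n : ℤ)
  refl : ∀ i : ℤ, i ≠ 0 → |i| ≤ (n : ℤ) → le i i
  antisymm : ∀ ⦃i j : ℤ⦄, le i j → le j i → i = j
  trans : ∀ ⦃i j k : ℤ⦄, le i j → le j k → le i k
  compat : ∀ ⦃i j : ℤ⦄, le i j → i ≤ j
  nsymm : ∀ ⦃i j : ℤ⦄, i ≠ -j → (le i j ↔ le (-j) (-i))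

namespace TypeCPoset

variable {n : ℕ}

/-- The strict relation `i ≺ j` of a type-C poset. -/
def lt (P : TypeCPoset n) (i j : ℤ) : Prop := P.le i j ∧ i ≠ j

/-- `P` has height one: every chain of `P` has cardinality at most two. -/
def HeightOne (P : TypeCPoset n) : Prop := ∀ i j k : ℤ, P.lt i j → P.lt j k → False

/-- `P` is separable: there is no relation `x ≺ y` with `x` negative and `y` positive. -/
def Separable (P : TypeCPoset n) : Prop := ∀ i j : ℤ, i < 0 → 0 < j → ¬ P.lt i j

/-- `P` has height `(1,1)`: `P⁺` has height exactly one and `P` has height exactly one. -/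
def Height11 (P : TypeCPoset n) : Prop :=
  P.HeightOne ∧ ∃ i j : ℤ, 0 < i ∧ 0 < j ∧ P.lt i j

/-- `P` has height `(0,1)`: `P⁺` has height zero and `P` has height exactly one. -/
def Height01 (P : TypeCPoset n) : Prop :=
  P.HeightOne ∧ (∀ i j : ℤ, 0 < i → 0 < j → ¬ P.lt i j) ∧ ∃ i j : ℤ, P.lt i j

end TypeCPoset

/-- The vertex set of the relation graph: the positive elements `{1, …, n}`. -/
abbrev Pos (n : ℕ) : Type := {i : ℤ // i ∈ Finset.Icc (1 : ℤ) (n : ℤ)}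

/-- The matrix index set `{-n, …, -1, 1, …, n}`. -/
abbrev Idx (n : ℕ) : Type := {i : ℤ // i ∈ (Finset.Icc (-(n : ℤ)) (n : ℤ)).erase 0}

/-- Negation on the index set. -/
def Idx.neg {n : ℕ} (a : Idx n) : Idx n :=
  ⟨-a.val, by
    have h := a.property
    simp only [Finset.mem_erase, Finset.mem_Icc] at h ⊢
    omega⟩

/-- A positive vertex as a matrix index. -/
def Pos.toIdx {n : ℕ} (i : Pos n) : Idx n :=
  ⟨i.val, by
    have h := i.property
    simp only [Finset.mem_erase, Finset.mem_Icc] at h ⊢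
    omega⟩

/-- `2n × 2n` complex matrices, with rows and columns indexed by `{-n, …, -1, 1, …, n}`. -/
abbrev Mat (n : ℕ) : Type := Matrix (Idx n) (Idx n) ℂ

namespace TypeCPoset

variable {n : ℕ}

/-- `D_i = E_{-i,-i} - E_{i,i}`. -/
def Dmat (i : Pos n) : Mat n :=
  Matrix.single i.toIdx.neg i.toIdx.neg 1 - Matrix.single i.toIdx i.toIdx 1

/-- `R^±_{i,j} = E_{-i,j} + E_{-j,i}`. -/
def Rpm (i j : Pos n) : Mat n :=
  Matrix.single i.toIdx.neg j.toIdx 1 + Matrix.single j.toIdx.neg i.toIdx 1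

/-- `R_{i,j} = E_{-j,-i} - E_{i,j}`. -/
def Rdash (i j : Pos n) : Mat n :=
  Matrix.single j.toIdx.neg i.toIdx.neg 1 - Matrix.single i.toIdx j.toIdx 1

/-- `E_{-i,i}`. -/
def Eloop (i : Pos n) : Mat n := Matrix.single i.toIdx.neg i.toIdx 1

/-- The standard spanning set of the type-C Lie poset algebra `g_C(P)`. -/
def gcSet (P : TypeCPoset n) : Set (Mat n) :=
  {M | (∃ i : Pos n, M = Dmat i)
      ∨ (∃ i j : Pos n, P.lt (-j.val) (-i.val) ∧ M = Rdash i j)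
      ∨ (∃ i j : Pos n, P.lt (-i.val) j.val ∧ P.lt (-j.val) i.val ∧ M = Rpm i j)
      ∨ (∃ i : Pos n, P.lt (-i.val) i.val ∧ M = Eloop i)}

/-- The simple graph underlying the relation graph `RG(P)`:
vertices `{1, …, n}`, with `i` adjacent to `j` (for `i ≠ j`) whenever there is a
(dashed or non-dashed) edge between them. -/
def RG (P : TypeCPoset n) : SimpleGraph (Pos n) where
  Adj i j := i ≠ j ∧ (P.lt (-i.val) j.val ∨ P.lt (-j.val) i.val ∨
      P.lt (-i.val) (-j.val) ∨ P.lt (-j.val) (-i.val))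
  symm := by
    constructor
    intro i j h
    exact ⟨h.1.symm, by tauto⟩
  loopless := by
    constructor
    intro i h
    exact h.1 rfl

/-- `RG(P)` has a (non-dashed) self-loop at vertex `i`, i.e. `-i ≺ i`. -/
def HasLoopAt (P : TypeCPoset n) (i : Pos n) : Prop := P.lt (-i.val) i.val

/-- There is a dashed edge `{i,j}` in `RG(P)`. -/
def DashedEdge (P : TypeCPoset n) (i j : Pos n) : Prop :=
  P.lt (-i.val) (-j.val) ∨ P.lt (-j.val) (-i.val)

/-- There is a non-dashed edge `{i,j}` in `RG(P)` (a self-loop when `i = j`). -/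
def NonDashedEdge (P : TypeCPoset n) (i j : Pos n) : Prop :=
  P.lt (-i.val) j.val ∨ P.lt (-j.val) i.val

open scoped Classical in
/-- The set of non-dashed edges of `RG(P)` (including self-loops). -/
noncomputable def edgesND (P : TypeCPoset n) : Finset (Sym2 (Pos n)) :=
  Finset.univ.filter fun e => ∃ i j : Pos n, e = Sym2.mk i j ∧ NonDashedEdge P i j

open scoped Classical in
/-- The set of dashed edges of `RG(P)`. -/
noncomputable def edgesD (P : TypeCPoset n) : Finset (Sym2 (Pos n)) :=
  Finset.univ.filter fun e => ∃ i j : Pos n, e = Sym2.mk i j ∧ i ≠ j ∧ DashedEdge P i j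

/-- `|E(P)|`, the number of edges of `RG(P)`. -/
noncomputable def numEdges (P : TypeCPoset n) : ℕ := (P.edgesND).card + (P.edgesD).card

/-- The cycles of `RG(P)`, recorded by their edge sets: a self-loop at `v`, or a cycle
of the underlying simple graph.  A cycle has an odd (resp. even) number of vertices
iff its edge set has odd (resp. even) cardinality. -/
def cycles (P : TypeCPoset n) : Set (Finset (Sym2 (Pos n))) :=
  {s | ∃ v : Pos n, P.HasLoopAt v ∧ s = {Sym2.mk v v}} ∪
  {s | ∃ (v : Pos n) (p : (RG P).Walk v v), p.IsCycle ∧ s = p.edges.toFinset}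

/-- The cycles of `RG(P)` contained in the connected component `c`. -/
def cyclesIn (P : TypeCPoset n) (c : (RG P).ConnectedComponent) :
    Set (Finset (Sym2 (Pos n))) :=
  {s | ∃ v : Pos n, (RG P).connectedComponentMk v = c ∧
    ((P.HasLoopAt v ∧ s = {Sym2.mk v v}) ∨
      ∃ p : (RG P).Walk v v, p.IsCycle ∧ s = p.edges.toFinset)}

/-- `η(P)`: the number of connected components of `RG(P)` containing no odd cycles. -/
noncomputable def eta (P : TypeCPoset n) : ℕ :=
  Nat.card {c : (RG P).ConnectedComponent // ¬ ∃ s ∈ P.cyclesIn c, Odd s.card}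

/-- The vertices visited by a cycle, recorded by its edge set. -/
def cycleVerts (s : Finset (Sym2 (Pos n))) : Set (Pos n) := {v | ∃ e ∈ s, v ∈ e}

end TypeCPoset

section LieDefs

variable (L : Type*) [LieRing L] [LieAlgebra ℂ L]

/-- The kernel of the bilinear form `B_φ(x, y) = φ⁅x, y⁆`. -/
def coadjKernel (φ : Module.Dual ℂ L) : Submodule ℂ L where
  carrier := {x | ∀ y : L, φ ⁅x, y⁆ = 0}
  add_mem' := by
    intro a b ha hb y
    simp only [Set.mem_setOf_eq] at ha hb ⊢
    rw [add_lie, map_add, ha y, hb y, add_zero]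
  zero_mem' := by
    intro y
    rw [zero_lie, map_zero]
  smul_mem' := by
    intro c x hx y
    simp only [Set.mem_setOf_eq] at hx ⊢
    rw [smul_lie, map_smul, hx y, smul_zero]

/-- The index of a Lie algebra: `ind g = min_{φ ∈ g*} dim ker(B_φ)`. -/
noncomputable def lieIndex : ℕ :=
  sInf (Set.range fun φ : Module.Dual ℂ L => Module.finrank ℂ (coadjKernel L φ))

/-- `φ` is a contact form on `L`: `L` is odd-dimensional and the restriction of
`B_φ(x, y) = φ⁅x, y⁆` to `ker φ` is nondegenerate. -/
def IsContactForm (φ : Module.Dual ℂ L) : Prop :=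
  Odd (Module.finrank ℂ L) ∧
    ∀ x : L, φ x = 0 → (∀ y : L, φ y = 0 → φ ⁅x, y⁆ = 0) → x = 0

/-- `L` is a contact Lie algebra. -/
def IsContact : Prop := ∃ φ : Module.Dual ℂ L, IsContactForm L φ

end LieDefs

end LiePoset

namespace LiePoset

attribute [local instance 100] LieRing.ofAssociativeRing

lemma Pos.val_pos {n : ℕ} (i : Pos n) : 0 < i.val := (Finset.mem_Icc.mp i.property).1

section LieIndex

variable {L L' : Type*} [LieRing L] [LieAlgebra ℂ L] [LieRing L'] [LieAlgebra ℂ L']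

lemma coadjKernel_comp_symm (e : L ≃ₗ⁅ℂ⁆ L') (φ : Module.Dual ℂ L) :
    coadjKernel L' (φ ∘ₗ e.symm.toLinearEquiv.toLinearMap) =
      (coadjKernel L φ).map e.toLinearEquiv.toLinearMap := by
  ext x
  rw [Submodule.mem_map_equiv]
  change (∀ y, φ (e.symm ⁅x, y⁆) = 0) ↔ ∀ y, φ ⁅e.symm x, y⁆ = 0
  simp only [LieEquiv.map_lie]
  exact ⟨fun h y => by simpa using h (e y), fun h y => h _⟩

lemma lieIndex_congr (e : L ≃ₗ⁅ℂ⁆ L') : lieIndex L = lieIndex L' := by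
  let pull : Module.Dual ℂ L → Module.Dual ℂ L' :=
    (· ∘ₗ e.symm.toLinearEquiv.toLinearMap)
  have hpull : Function.Surjective pull := fun φ' =>
    ⟨φ' ∘ₗ e.toLinearEquiv.toLinearMap, by ext; simp [pull]⟩
  unfold lieIndex
  rw [← hpull.range_comp]
  congr 2
  funext φ
  simp only [Function.comp_apply, pull]
  rw [coadjKernel_comp_symm, LinearEquiv.finrank_map_eq]

lemma lieIndex_eq_of_map_eq (e : L ≃ₗ⁅ℂ⁆ L') (g : LieSubalgebra ℂ L)
    (g' : LieSubalgebra ℂ L')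
    (h : g.toSubmodule.map e.toLinearEquiv.toLinearMap = g'.toSubmodule) :
    lieIndex g = lieIndex g' :=
  lieIndex_congr (e.ofSubalgebras g g' (LieSubalgebra.toSubmodule_injective h))

end LieIndex

section SignedPermConj

variable {ι R : Type*} [CommSemiring R]

lemma mul_mul_mul_self_cancel {ε : ι → R} (hε : ∀ i, ε i * ε i = 1) (a b : ι) (x : R) :
    ε a * ε b * (ε a * ε b * x) = x := by
  calc _ = ε a * ε a * (ε b * ε b * x) := by ring
    _ = x := by rw [hε, hε, one_mul, one_mul]

variable [Fintype ι] [DecidableEq ι]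

/-- Conjugation by the signed permutation matrix with permutation `σ` and signs `ε`. -/
def signedPermConj (σ : Equiv.Perm ι) (ε : ι → R) (hε : ∀ i, ε i * ε i = 1) :
    Matrix ι ι R ≃ₐ[R] Matrix ι ι R where
  toFun M := Matrix.of fun p q => ε p * ε q * M (σ.symm p) (σ.symm q)
  invFun M := Matrix.of fun p q => ε (σ p) * ε (σ q) * M (σ p) (σ q)
  left_inv M := by
    ext p q
    simp only [Matrix.of_apply, Equiv.symm_apply_apply, mul_mul_mul_self_cancel hε]
  right_inv M := by
    ext p q
    simp only [Matrix.of_apply, Equiv.apply_symm_apply, mul_mul_mul_self_cancel hε]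
  map_mul' M N := by
    ext p q
    simp only [Matrix.of_apply, Matrix.mul_apply, Finset.mul_sum]
    conv_rhs => rw [← Equiv.sum_comp σ]
    refine Finset.sum_congr rfl fun r _ => ?_
    simp only [Equiv.symm_apply_apply]
    calc _ = ε (σ r) * ε (σ r) * (ε p * ε q * (M (σ.symm p) r * N r (σ.symm q))) := by
          rw [hε, one_mul]
      _ = _ := by ring
  map_add' M N := by
    ext p q
    simp only [Matrix.of_apply, Matrix.add_apply]
    ring
  commutes' r := by
    ext p q
    simp only [Matrix.of_apply, Matrix.algebraMap_eq_diagonal, Pi.algebraMap_apply,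
      Matrix.diagonal_apply, σ.symm.injective.eq_iff]
    split_ifs with hpq
    · rw [hpq, hε, one_mul]
    · rw [mul_zero]

lemma signedPermConj_single (σ : Equiv.Perm ι) {ε : ι → R} (hε : ∀ i, ε i * ε i = 1)
    (a b : ι) (c : R) :
    signedPermConj σ ε hε (Matrix.single a b c) =
      (ε (σ a) * ε (σ b)) • Matrix.single (σ a) (σ b) c := by
  ext p q
  simp only [signedPermConj, AlgEquiv.coe_mk, Equiv.coe_fn_mk, Matrix.of_apply,
    Matrix.smul_apply, Matrix.single_apply, Equiv.eq_symm_apply, smul_eq_mul]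
  split_ifs with h
  · rw [h.1, h.2]
  · rw [mul_zero, mul_zero]

end SignedPermConj

namespace TypeCPoset

variable {n : ℕ} (P : TypeCPoset n)

lemma lt_iff_lt_neg_neg {i j : ℤ} (h : i ≠ -j) : P.lt i j ↔ P.lt (-j) (-i) := by
  unfold TypeCPoset.lt
  rw [P.nsymm h]
  exact and_congr_right fun _ => by omega

lemma lt_neg_neg_iff (i j : Pos n) : P.lt (-i.val) (-j.val) ↔ P.lt j.val i.val := by
  rw [P.lt_iff_lt_neg_neg (by linarith [i.val_pos, j.val_pos]), neg_neg, neg_neg]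

lemma lt_neg_comm {i j : Pos n} (hij : i ≠ j) : P.lt (-i.val) j.val ↔ P.lt (-j.val) i.val := by
  rw [P.lt_iff_lt_neg_neg (by rwa [ne_eq, neg_inj, ← Subtype.ext_iff]), neg_neg]

/-- For positive `i`, `j`: `{i, j}` is an edge of `RG(P)`, dashed (`i ≺ j`, `j ≺ i`) or not. -/
def Linked (i j : ℤ) : Prop := P.lt (-i) j ∨ P.lt (-j) i ∨ P.lt i j ∨ P.lt j i

lemma linked_comm (i j : ℤ) : P.Linked i j ↔ P.Linked j i := by
  unfold Linked
  tauto

lemma linked_iff (i j : Pos n) :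
    P.Linked i j ↔ P.NonDashedEdge i j ∨ (i ≠ j ∧ P.DashedEdge i j) := by
  have hne : P.lt i.val j.val ∨ P.lt j.val i.val → i ≠ j := by
    rintro (h | h) rfl <;> exact h.2 rfl
  simp only [Linked, NonDashedEdge, DashedEdge, lt_neg_neg_iff]
  tauto

def undash : TypeCPoset n where
  le x y := (x = y ∧ x ≠ 0 ∧ |x| ≤ n) ∨ (x < 0 ∧ 0 < y ∧ P.Linked (-x) y)
  supp := by
    rintro i j (⟨rfl, h0, hn⟩ | ⟨hi, hj, h | h | h | h⟩)
    · exact ⟨h0, hn, h0, hn⟩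
    all_goals
      have := P.supp h.1
      simp only [abs_le] at this ⊢
      omega
  refl _ h0 hn := Or.inl ⟨rfl, h0, hn⟩
  antisymm := by
    rintro i j (⟨rfl, -⟩ | ⟨hi, hj, -⟩) (h | ⟨hi', hj', -⟩) <;> first | rfl | omega
  trans := by
    rintro i j k (⟨rfl, -⟩ | ⟨hi, hj, h⟩) h'
    · exact h'
    · rcases h' with ⟨rfl, -⟩ | ⟨hj', -⟩
      · exact Or.inr ⟨hi, hj, h⟩
      · omega
  compat := by
    rintro i j (⟨rfl, -⟩ | ⟨hi, hj, -⟩) <;> omega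
  nsymm := by
    intro i j _
    simp only [neg_neg, neg_inj, abs_neg, neg_ne_zero, neg_lt_zero, Left.neg_pos_iff,
      P.linked_comm j]
    constructor
    · rintro (⟨rfl, h⟩ | h)
      · exact Or.inl ⟨rfl, h⟩
      · exact Or.inr ⟨h.2.1, h.1, h.2.2⟩
    · rintro (⟨rfl, h⟩ | h)
      · exact Or.inl ⟨rfl, h⟩
      · exact Or.inr ⟨h.2.1, h.1, h.2.2⟩

lemma undash_lt_iff {x y : ℤ} : P.undash.lt x y ↔ x < 0 ∧ 0 < y ∧ P.Linked (-x) y := by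
  constructor
  · rintro ⟨⟨rfl, -⟩ | h, hne⟩
    · exact absurd rfl hne
    · exact h
  · rintro ⟨hx, hy, h⟩
    exact ⟨Or.inr ⟨hx, hy, h⟩, by omega⟩

lemma undash_lt_neg_iff (i j : Pos n) : P.undash.lt (-i.val) j.val ↔ P.Linked i j := by
  simp only [undash_lt_iff, neg_neg, neg_lt_zero, i.val_pos, j.val_pos, true_and]

lemma not_undash_lt_neg (x : ℤ) (j : Pos n) : ¬ P.undash.lt x (-j.val) := by
  rw [undash_lt_iff]
  have := j.val_pos
  omega

lemma undash_heightOne : P.undash.HeightOne := by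
  intro i j k hij hjk
  rw [undash_lt_iff] at hij hjk
  omega

lemma undash_hasLoopAt {v : Pos n} (hv : P.HasLoopAt v) : P.undash.HasLoopAt v :=
  (P.undash_lt_neg_iff v v).mpr (Or.inl hv)

lemma undash_height01 {v : Pos n} (hv : P.HasLoopAt v) : P.undash.Height01 := by
  refine ⟨P.undash_heightOne, fun i j hi _ h => ?_, _, _, P.undash_hasLoopAt hv⟩
  have := ((undash_lt_iff P).mp h).1
  omega

lemma RG_undash : RG P.undash = RG P := by
  ext i j
  simp only [RG, undash_lt_neg_iff, not_undash_lt_neg, or_false]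
  simp only [Linked, lt_neg_neg_iff]
  tauto

lemma nonDashedEdge_undash_iff (i j : Pos n) : P.undash.NonDashedEdge i j ↔ P.Linked i j := by
  rw [NonDashedEdge, undash_lt_neg_iff, undash_lt_neg_iff, linked_comm P j, or_self]

lemma not_dashedEdge_undash (i j : Pos n) : ¬ P.undash.DashedEdge i j := by
  rintro (h | h) <;> exact P.not_undash_lt_neg _ _ h

lemma edgesD_undash : P.undash.edgesD = ∅ := by
  simp [edgesD, not_dashedEdge_undash]

lemma edgesND_undash : P.undash.edgesND = P.edgesND ∪ P.edgesD := by
  ext e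
  simp only [edgesND, edgesD, Finset.mem_filter, Finset.mem_univ, true_and, Finset.mem_union,
    nonDashedEdge_undash_iff, linked_iff, and_or_left, exists_or]

lemma dashedEdge_comm {i j : Pos n} : P.DashedEdge i j ↔ P.DashedEdge j i := Or.comm

lemma not_dashedEdge_of_nonDashedEdge (h1 : P.HeightOne) {i j : Pos n}
    (hnd : P.NonDashedEdge i j) : ¬ P.DashedEdge i j := by
  rintro hd
  rcases hnd with h | h <;> rcases hd with h' | h'
  · exact h1 _ _ _ h ((P.lt_neg_neg_iff i j).mp h')
  · exact h1 _ _ _ h' h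
  · exact h1 _ _ _ h' h
  · exact h1 _ _ _ h ((P.lt_neg_neg_iff j i).mp h')

lemma disjoint_edgesND_edgesD (h1 : P.HeightOne) : Disjoint P.edgesND P.edgesD := by
  simp only [Finset.disjoint_left, edgesND, edgesD, Finset.mem_filter, Finset.mem_univ,
    true_and]
  rintro _ ⟨i, j, rfl, hnd⟩ ⟨k, l, hkl, -, hd⟩
  rcases Sym2.eq_iff.mp hkl with ⟨rfl, rfl⟩ | ⟨rfl, rfl⟩
  · exact P.not_dashedEdge_of_nonDashedEdge h1 hnd hd
  · exact P.not_dashedEdge_of_nonDashedEdge h1 hnd (P.dashedEdge_comm.mp hd)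

lemma numEdges_undash (h1 : P.HeightOne) : P.undash.numEdges = P.numEdges := by
  rw [numEdges, numEdges, edgesD_undash, edgesND_undash,
    Finset.card_union_of_disjoint (P.disjoint_edgesND_edgesD h1), Finset.card_empty, add_zero]

def IsLowerPos (i : ℤ) : Prop := 0 < i ∧ ∃ j, 0 < j ∧ P.lt i j

lemma not_isLowerPos_of_lt (h1 : P.HeightOne) {x i : ℤ} (h : P.lt x i) : ¬ P.IsLowerPos i :=
  fun ⟨_, _, _, hij⟩ => h1 _ _ _ h hij

lemma isLowerPos_of_lt {i j : Pos n} (h : P.lt i j) : P.IsLowerPos i :=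
  ⟨i.val_pos, j, j.val_pos, h⟩

open scoped Classical in
noncomputable def flipLower (a : Idx n) : Idx n := if P.IsLowerPos |a.val| then a.neg else a

lemma flipLower_involutive : Function.Involutive P.flipLower := by
  intro a
  by_cases h : P.IsLowerPos |a.val|
  · have h' : P.IsLowerPos |a.neg.val| := by rwa [Idx.neg, abs_neg]
    rw [show P.flipLower a = a.neg from if_pos h,
      show P.flipLower a.neg = a.neg.neg from if_pos h']
    exact Subtype.ext (neg_neg a.val)
  · have hfix : P.flipLower a = a := if_neg h
    rw [hfix, hfix]

open scoped Classical in
noncomputable def lowerSign (a : Idx n) : ℂ := if P.IsLowerPos a.val then -1 else 1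

lemma lowerSign_mul_self (a : Idx n) : P.lowerSign a * P.lowerSign a = 1 := by
  unfold lowerSign
  split_ifs <;> norm_num

noncomputable def lowerConj : Mat n ≃ₐ[ℂ] Mat n :=
  signedPermConj (P.flipLower_involutive.toPerm _) P.lowerSign P.lowerSign_mul_self

lemma lowerConj_single (a b : Idx n) :
    P.lowerConj (Matrix.single a b 1) =
      (P.lowerSign (P.flipLower a) * P.lowerSign (P.flipLower b)) •
        Matrix.single (P.flipLower a) (P.flipLower b) 1 :=
  signedPermConj_single _ _ a b 1

section Generators

variable {P} {i j : Pos n}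

lemma flipLower_toIdx_of_isLowerPos (h : P.IsLowerPos i) : P.flipLower i.toIdx = i.toIdx.neg :=
  if_pos (by rwa [Pos.toIdx, abs_of_pos i.val_pos])

lemma flipLower_neg_toIdx_of_isLowerPos (h : P.IsLowerPos i) :
    P.flipLower i.toIdx.neg = i.toIdx := by
  rw [flipLower, if_pos (by rwa [Idx.neg, Pos.toIdx, abs_neg, abs_of_pos i.val_pos])]
  exact Subtype.ext (neg_neg i.val)

lemma flipLower_toIdx_of_not_isLowerPos (h : ¬ P.IsLowerPos i) :
    P.flipLower i.toIdx = i.toIdx :=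
  if_neg (by rwa [Pos.toIdx, abs_of_pos i.val_pos])

lemma flipLower_neg_toIdx_of_not_isLowerPos (h : ¬ P.IsLowerPos i) :
    P.flipLower i.toIdx.neg = i.toIdx.neg :=
  if_neg (by rwa [Idx.neg, Pos.toIdx, abs_neg, abs_of_pos i.val_pos])

variable (P i)

lemma lowerSign_neg_toIdx : P.lowerSign i.toIdx.neg = 1 :=
  if_neg fun h => (neg_pos.mp h.1).not_gt i.val_pos

lemma lowerSign_toIdx_of_isLowerPos (h : P.IsLowerPos i) : P.lowerSign i.toIdx = -1 := if_pos h

lemma lowerSign_toIdx_of_not_isLowerPos (h : ¬ P.IsLowerPos i) : P.lowerSign i.toIdx = 1 :=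
  if_neg h

variable {P i}

lemma lowerConj_Dmat_of_isLowerPos (h : P.IsLowerPos i) : P.lowerConj (Dmat i) = -Dmat i := by
  simp only [Dmat, map_sub, lowerConj_single, flipLower_toIdx_of_isLowerPos h,
    flipLower_neg_toIdx_of_isLowerPos h, lowerSign_neg_toIdx, lowerSign_toIdx_of_isLowerPos P i h]
  module

lemma lowerConj_Dmat_of_not_isLowerPos (h : ¬ P.IsLowerPos i) :
    P.lowerConj (Dmat i) = Dmat i := by
  simp only [Dmat, map_sub, lowerConj_single, flipLower_toIdx_of_not_isLowerPos h,
    flipLower_neg_toIdx_of_not_isLowerPos h, lowerSign_neg_toIdx,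
    lowerSign_toIdx_of_not_isLowerPos P i h]
  module

lemma lowerConj_Rdash (hi : P.IsLowerPos i) (hj : ¬ P.IsLowerPos j) :
    P.lowerConj (Rdash i j) = -Rpm i j := by
  simp only [Rdash, Rpm, map_sub, lowerConj_single, flipLower_toIdx_of_isLowerPos hi,
    flipLower_neg_toIdx_of_isLowerPos hi, flipLower_toIdx_of_not_isLowerPos hj,
    flipLower_neg_toIdx_of_not_isLowerPos hj, lowerSign_neg_toIdx,
    lowerSign_toIdx_of_isLowerPos P i hi, lowerSign_toIdx_of_not_isLowerPos P j hj]
  module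

lemma lowerConj_Rpm (hi : ¬ P.IsLowerPos i) (hj : ¬ P.IsLowerPos j) :
    P.lowerConj (Rpm i j) = Rpm i j := by
  simp only [Rpm, map_add, lowerConj_single, flipLower_toIdx_of_not_isLowerPos hi,
    flipLower_neg_toIdx_of_not_isLowerPos hi, flipLower_toIdx_of_not_isLowerPos hj,
    flipLower_neg_toIdx_of_not_isLowerPos hj, lowerSign_neg_toIdx,
    lowerSign_toIdx_of_not_isLowerPos P i hi, lowerSign_toIdx_of_not_isLowerPos P j hj]
  module

lemma lowerConj_Eloop (h : ¬ P.IsLowerPos i) : P.lowerConj (Eloop i) = Eloop i := by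
  simp only [Eloop, lowerConj_single, flipLower_toIdx_of_not_isLowerPos h,
    flipLower_neg_toIdx_of_not_isLowerPos h, lowerSign_neg_toIdx,
    lowerSign_toIdx_of_not_isLowerPos P i h]
  module

end Generators

lemma Rpm_comm (i j : Pos n) : Rpm i j = Rpm j i := add_comm _ _

lemma Rpm_self (i : Pos n) : Rpm i i = (2 : ℂ) • Eloop i := (two_smul ℂ _).symm

lemma Dmat_mem_gcSet (i : Pos n) : Dmat i ∈ P.gcSet := Or.inl ⟨i, rfl⟩

lemma Rdash_mem_gcSet {i j : Pos n} (h : P.lt (-j.val) (-i.val)) : Rdash i j ∈ P.gcSet :=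
  Or.inr (Or.inl ⟨i, j, h, rfl⟩)

lemma Rpm_mem_gcSet {i j : Pos n} (hij : P.lt (-i.val) j.val) (hji : P.lt (-j.val) i.val) :
    Rpm i j ∈ P.gcSet :=
  Or.inr (Or.inr (Or.inl ⟨i, j, hij, hji, rfl⟩))

lemma Eloop_mem_gcSet {i : Pos n} (h : P.HasLoopAt i) : Eloop i ∈ P.gcSet :=
  Or.inr (Or.inr (Or.inr ⟨i, h, rfl⟩))

section Span

variable {P}

open Submodule

lemma lowerConj_mem_span_gcSet_undash (h1 : P.HeightOne) {M : Mat n} (hM : M ∈ P.gcSet) :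
    P.lowerConj M ∈ span ℂ P.undash.gcSet := by
  rcases hM with ⟨i, rfl⟩ | ⟨i, j, hji, rfl⟩ | ⟨i, j, hij, hji, rfl⟩ | ⟨i, hi, rfl⟩
  · by_cases h : P.IsLowerPos i
    · rw [lowerConj_Dmat_of_isLowerPos h]
      exact neg_mem (subset_span (Dmat_mem_gcSet _ i))
    · rw [lowerConj_Dmat_of_not_isLowerPos h]
      exact subset_span (Dmat_mem_gcSet _ i)
  · have hij : P.lt i j := (P.lt_neg_neg_iff j i).mp hji
    rw [lowerConj_Rdash (P.isLowerPos_of_lt hij) (P.not_isLowerPos_of_lt h1 hij)]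
    exact neg_mem (subset_span (Rpm_mem_gcSet _
      ((P.undash_lt_neg_iff i j).mpr (Or.inr (Or.inr (Or.inl hij))))
      ((P.undash_lt_neg_iff j i).mpr (Or.inr (Or.inr (Or.inr hij))))))
  · rw [lowerConj_Rpm (P.not_isLowerPos_of_lt h1 hji) (P.not_isLowerPos_of_lt h1 hij)]
    exact subset_span (Rpm_mem_gcSet _ ((P.undash_lt_neg_iff i j).mpr (Or.inl hij))
      ((P.undash_lt_neg_iff j i).mpr (Or.inl hji)))
  · rw [lowerConj_Eloop (P.not_isLowerPos_of_lt h1 hi)]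
    exact subset_span (Eloop_mem_gcSet _ (P.undash_hasLoopAt hi))

lemma Rpm_mem_map_span_of_lt_neg (h1 : P.HeightOne) {i j : Pos n} (h : P.lt (-i.val) j.val) :
    Rpm i j ∈ (span ℂ P.gcSet).map P.lowerConj.toLinearMap := by
  by_cases hij : i = j
  · subst hij
    rw [Rpm_self, ← lowerConj_Eloop (P.not_isLowerPos_of_lt h1 h)]
    exact smul_mem _ _ (mem_map_of_mem (subset_span (Eloop_mem_gcSet P h)))
  · have h' := (P.lt_neg_comm hij).mp h
    rw [← lowerConj_Rpm (P.not_isLowerPos_of_lt h1 h') (P.not_isLowerPos_of_lt h1 h)]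
    exact mem_map_of_mem (subset_span (Rpm_mem_gcSet P h h'))

lemma Rpm_mem_map_span_of_lt (h1 : P.HeightOne) {i j : Pos n} (h : P.lt i.val j.val) :
    Rpm i j ∈ (span ℂ P.gcSet).map P.lowerConj.toLinearMap := by
  have hji : P.lt (-j.val) (-i.val) := (P.lt_neg_neg_iff j i).mpr h
  rw [← neg_neg (Rpm i j), ← lowerConj_Rdash (P.isLowerPos_of_lt h) (P.not_isLowerPos_of_lt h1 h)]
  exact neg_mem (mem_map_of_mem (subset_span (Rdash_mem_gcSet P hji)))

lemma mem_map_span_of_mem_gcSet_undash (h1 : P.HeightOne) {M : Mat n}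
    (hM : M ∈ P.undash.gcSet) :
    M ∈ (span ℂ P.gcSet).map P.lowerConj.toLinearMap := by
  rcases hM with ⟨i, rfl⟩ | ⟨i, j, hji, rfl⟩ | ⟨i, j, hij, -, rfl⟩ | ⟨i, hi, rfl⟩
  · by_cases h : P.IsLowerPos i
    · rw [← neg_neg (Dmat i), ← lowerConj_Dmat_of_isLowerPos h]
      exact neg_mem (mem_map_of_mem (subset_span (Dmat_mem_gcSet P i)))
    · rw [← lowerConj_Dmat_of_not_isLowerPos h]
      exact mem_map_of_mem (subset_span (Dmat_mem_gcSet P i))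
  · exact absurd hji (P.not_undash_lt_neg _ _)
  · rcases (P.undash_lt_neg_iff i j).mp hij with h | h | h | h
    · exact Rpm_mem_map_span_of_lt_neg h1 h
    · exact Rpm_comm i j ▸ Rpm_mem_map_span_of_lt_neg h1 h
    · exact Rpm_mem_map_span_of_lt h1 h
    · exact Rpm_comm i j ▸ Rpm_mem_map_span_of_lt h1 h
  · have hloop : P.HasLoopAt i := by
      rcases (P.undash_lt_neg_iff i i).mp hi with h | h | h | h
      exacts [h, h, absurd rfl h.2, absurd rfl h.2]
    rw [← lowerConj_Eloop (P.not_isLowerPos_of_lt h1 hloop)]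
    exact mem_map_of_mem (subset_span (Eloop_mem_gcSet P hloop))

lemma map_span_gcSet (h1 : P.HeightOne) :
    (span ℂ P.gcSet).map P.lowerConj.toLinearMap = span ℂ P.undash.gcSet :=
  le_antisymm
    (map_le_iff_le_comap.mpr (span_le.mpr fun _ hM ↦ lowerConj_mem_span_gcSet_undash h1 hM))
    (span_le.mpr fun _ hM ↦ mem_map_span_of_mem_gcSet_undash h1 hM)

end Span

end TypeCPoset

theorem selfLoop_height11_reduction_general (n : ℕ) (P : TypeCPoset n)
    (hconn : (TypeCPoset.RG P).Connected)
    (h11 : P.Height11) (hloop : ∃ v : Pos n, P.HasLoopAt v) :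
    ∃ P' : TypeCPoset n,
      (TypeCPoset.RG P').Connected ∧ P'.Height01 ∧
      Fintype.card (Pos n) = Fintype.card (Pos n) ∧
      P'.numEdges = P.numEdges ∧ (∃ v : Pos n, P'.HasLoopAt v) ∧
      ∀ (g g' : LieSubalgebra ℂ (Mat n)),
        g.toSubmodule = Submodule.span ℂ (TypeCPoset.gcSet P) →
        g'.toSubmodule = Submodule.span ℂ (TypeCPoset.gcSet P') →
        lieIndex ↥g = lieIndex ↥g' := by
  obtain ⟨v, hv⟩ := hloop
  refine ⟨P.undash, P.RG_undash ▸ hconn, P.undash_height01 hv, rfl, P.numEdges_undash h11.1,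
    ⟨v, P.undash_hasLoopAt hv⟩, fun g g' hg hg' => ?_⟩
  refine lieIndex_eq_of_map_eq P.lowerConj.toLieEquiv g g' ?_
  rw [hg, hg']
  exact TypeCPoset.map_span_gcSet h11.1

/-- **Proposition.** Let `P` be a connected, non-separable type-C poset of height `(1,1)`
such that `RG(P)` contains a self-loop.  Then there exists a connected type-C poset `P'`
of height `(0,1)` (on the same vertex set, so `|V(P)| = |V(P')|`) such that
`|E(P)| = |E(P')|`, `RG(P')` contains a self-loop, and `ind g_C(P) = ind g_C(P')`. -/
theorem selfLoop_height11_reduction (n : ℕ) (P : TypeCPoset n)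
    (hconn : (TypeCPoset.RG P).Connected) (hns : ¬ P.Separable)
    (h11 : P.Height11) (hloop : ∃ v : Pos n, P.HasLoopAt v) :
    ∃ P' : TypeCPoset n,
      (TypeCPoset.RG P').Connected ∧ P'.Height01 ∧
      Fintype.card (Pos n) = Fintype.card (Pos n) ∧
      P'.numEdges = P.numEdges ∧ (∃ v : Pos n, P'.HasLoopAt v) ∧
      ∀ (g g' : LieSubalgebra ℂ (Mat n)),
        g.toSubmodule = Submodule.span ℂ (TypeCPoset.gcSet P) →
        g'.toSubmodule = Submodule.span ℂ (TypeCPoset.gcSet P') →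
        lieIndex ↥g = lieIndex ↥g' :=
  selfLoop_height11_reduction_general n P hconn h11 hloop

end LiePoset
end

section
/- Let P be a connected type-C poset of height one. If the relation graph RG(P) contains two vertex-disjoint odd cycles, then g_C(P) is not contact. -/
open scoped DirectSum

attribute [instance] LieRing.ofAssociativeRing


/-!
The nilradical `A` of `g_C(P)` is spanned by the generators `R_{i,j}`, `R^±_{i,j}`, `E_{-i,i}`,
all supported on entries `(a, b)` with `a ≺ b`; since `P` has height one, any product of two
such matrices vanishes, so `A` is abelian. The diagonal matrix `d` with entry `1/2` at the bottom
and `-1/2` at the top of each relation lies in the span of the `D_k` and acts as the identity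
on `A`. Given `φ`, the `|V|` conditions `φ⁅D_k, a⁆ = 0` have a nonzero solution `a ∈ A` as soon
as `dim A > |V|`; such an `a` is in the radical of `B_φ`, and `φ a = φ⁅d, a⁆ = 0`, so `φ` is not
a contact form. Finally, reading off the entries in the rows `-i` separates the generators
attached to distinct edges and loops of `RG(P)`, so `dim A` is at least their number, which for
a connected graph containing two disjoint cycles (loops included) exceeds `|V|`.
-/

open Function Matrix Module Submodule Set

namespace SimpleGraph

variable {V : Type*} [Finite V] {G : SimpleGraph V}

theorem Connected.card_le_card_edgeSet_of_isCycle (hG : G.Connected) {u : V} {c : G.Walk u u}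
    (hc : c.IsCycle) : Nat.card V ≤ Nat.card G.edgeSet := by
  have hnot : Nat.card G.edgeSet + 1 ≠ Nat.card V := fun h =>
    (isTree_iff_connected_and_card.mpr ⟨hG, h⟩).isAcyclic c hc
  have := hG.card_vert_le_card_edgeSet_add_one
  omega

theorem Connected.card_lt_card_edgeSet_of_isCycle_of_isCycle (hG : G.Connected) {u v : V}
    {c₁ : G.Walk u u} {c₂ : G.Walk v v} (hc₁ : c₁.IsCycle) (hc₂ : c₂.IsCycle)
    (hdisj : ∀ e ∈ c₁.edges, e ∉ c₂.edges) : Nat.card V < Nat.card G.edgeSet := by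
  obtain ⟨⟨x, y⟩, he⟩ := List.exists_mem_of_ne_nil _ (Walk.edges_eq_nil.not.mpr hc₁.not_nil)
  have hbridge : ¬ G.IsBridge s(x, y) := fun h => h.notMem_edges_of_isCycle hc₁ he
  have hc₂' := Walk.IsCycle.toDeleteEdges G {s(x, y)} hc₂
    fun e he₂ h => hdisj _ he (by rwa [Set.mem_singleton_iff.mp h] at he₂)
  have hle :=
    (hG.connected_delete_edge_of_not_isBridge hbridge).card_le_card_edgeSet_of_isCycle hc₂'
  have hmem : s(x, y) ∈ G.edgeSet := c₁.edges_subset_edgeSet he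
  rw [edgeSet_deleteEdges, Nat.card_coe_set_eq, ncard_sdiff_singleton_of_mem hmem] at hle
  have := (ncard_pos (toFinite _)).mpr ⟨_, hmem⟩
  rw [Nat.card_coe_set_eq]
  omega

end SimpleGraph

namespace Matrix

variable {m R : Type*} [CommRing R]

def supportedOn (r : m → m → Prop) : Submodule R (Matrix m m R) where
  carrier := {M | ∀ a b, ¬ r a b → M a b = 0}
  add_mem' hM hN a b hab := by simp [hM a b hab, hN a b hab]
  zero_mem' _ _ _ := rfl
  smul_mem' c M hM a b hab := by simp [hM a b hab]

variable {r : m → m → Prop}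

theorem single_mem_supportedOn [DecidableEq m] {a b : m} (hab : r a b) (c : R) :
    single a b c ∈ supportedOn r := by
  intro x y hxy
  rw [single_apply, if_neg]
  rintro ⟨rfl, rfl⟩
  exact hxy hab

theorem mul_eq_zero_of_mem_supportedOn [Fintype m] (hr : ∀ a b c, r a b → r b c → False)
    {M N : Matrix m m R} (hM : M ∈ supportedOn r) (hN : N ∈ supportedOn r) : M * N = 0 := by
  ext a c
  rw [mul_apply, zero_apply]
  refine Finset.sum_eq_zero fun b _ => ?_
  by_cases hab : r a b
  · rw [hN b c fun hbc => hr a b c hab hbc, mul_zero]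
  · rw [hM a b hab, zero_mul]

theorem lie_eq_zero_of_mem_supportedOn [Fintype m] (hr : ∀ a b c, r a b → r b c → False)
    {M N : Matrix m m R} (hM : M ∈ supportedOn r) (hN : N ∈ supportedOn r) : ⁅M, N⁆ = 0 := by
  rw [Ring.lie_def, mul_eq_zero_of_mem_supportedOn hr hM hN,
    mul_eq_zero_of_mem_supportedOn hr hN hM, sub_zero]

theorem diagonal_lie_eq_self_of_mem_supportedOn [Fintype m] [DecidableEq m] {δ : m → R}
    (hδ : ∀ a b, r a b → δ a - δ b = 1) {M : Matrix m m R} (hM : M ∈ supportedOn r) :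
    ⁅diagonal δ, M⁆ = M := by
  ext a b
  rw [Ring.lie_def, sub_apply, diagonal_mul, mul_diagonal, ← mul_comm (δ b), ← sub_mul]
  by_cases hab : r a b
  · rw [hδ a b hab, one_mul]
  · rw [hM a b hab, mul_zero]

end Matrix

namespace LiePoset

section Contact

variable {L : Type*} [LieRing L] [LieAlgebra ℂ L]

theorem not_isContact_of_abelian_of_card_lt_finrank {ι : Type*} [Fintype ι] (D : ι → L)
    (A : Submodule ℂ L) (hspan : span ℂ (range D) ⊔ A = ⊤)
    (hA : ∀ a ∈ A, ∀ b ∈ A, ⁅a, b⁆ = 0) (d : L) (hdA : ∀ a ∈ A, ⁅d, a⁆ = a)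
    (hcard : Fintype.card ι < finrank ℂ A) : ¬ IsContact L := by
  rintro ⟨φ, -, hφ⟩
  have : FiniteDimensional ℂ A := Module.finite_of_finrank_pos (by omega)
  let T : A →ₗ[ℂ] ι → ℂ :=
    LinearMap.pi fun i => φ ∘ₗ LieModule.toEnd ℂ L L (D i) ∘ₗ A.subtype
  obtain ⟨⟨a, ha⟩, haT, ha0⟩ := (Submodule.ne_bot_iff _).mp
    (LinearMap.ker_ne_bot_of_finrank_lt (f := T) (by simpa using hcard))
  have hTa : ∀ i, φ ⁅D i, a⁆ = 0 := fun i => congrFun haT i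
  have hrad : ∀ y, φ ⁅a, y⁆ = 0 := by
    have : span ℂ (range D) ⊔ A ≤ LinearMap.ker (φ ∘ₗ LieModule.toEnd ℂ L L a) := by
      refine sup_le (span_le.mpr ?_) fun b hb => ?_
      · rintro _ ⟨i, rfl⟩
        rw [SetLike.mem_coe, LinearMap.mem_ker, LinearMap.comp_apply,
          LieModule.toEnd_apply_apply, ← lie_skew, map_neg, hTa i, neg_zero]
      · simp [hA a ha b hb]
    exact fun y => this (hspan ▸ mem_top)
  have hφa : φ a = 0 := by
    rw [← hdA a ha, ← lie_skew, map_neg, hrad, neg_zero]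
  exact ha0 (Subtype.ext (hφ a hφa fun y _ => hrad y))

theorem not_isContact_subalgebra_of_abelian_of_card_lt_finrank (g : LieSubalgebra ℂ L)
    {ι : Type*} [Fintype ι] (D : ι → L) (A : Submodule ℂ L)
    (hg : g.toSubmodule = span ℂ (range D) ⊔ A) (hA : ∀ a ∈ A, ∀ b ∈ A, ⁅a, b⁆ = 0)
    {d : L} (hd : d ∈ g) (hdA : ∀ a ∈ A, ⁅d, a⁆ = a) (hcard : Fintype.card ι < finrank ℂ A) :
    ¬ IsContact g := by
  let i : g →ₗ[ℂ] L := g.incl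
  have hi : Injective i := Subtype.val_injective
  have hrange : LinearMap.range i = g.toSubmodule := by ext x; simp [i]
  have hAg : A ≤ g.toSubmodule := hg ▸ le_sup_right
  have hDg : ∀ k, D k ∈ g := fun k =>
    (hg ▸ le_sup_left : span ℂ (range D) ≤ g.toSubmodule) (subset_span ⟨k, rfl⟩)
  have hmapD : (span ℂ (range fun k => (⟨D k, hDg k⟩ : g))).map i = span ℂ (range D) := by
    rw [map_span, ← range_comp]; rfl
  have hmapA : (A.comap i).map i = A := by
    rw [map_comap_eq, inf_eq_right, hrange]; exact hAg
  refine not_isContact_of_abelian_of_card_lt_finrank (fun k => (⟨D k, hDg k⟩ : g)) (A.comap i)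
    (map_injective_of_injective hi ?_) (fun a ha b hb => Subtype.ext (hA a ha b hb)) ⟨d, hd⟩
    (fun a ha => Subtype.ext (hdA a ha)) ?_
  · rw [Submodule.map_sup, hmapD, hmapA, Submodule.map_top, hrange, hg]
  · rwa [(equivMapOfInjective i hi (A.comap i)).finrank_eq, hmapA]

end Contact

variable {n : ℕ}

theorem Pos.toIdx_injective : Injective (Pos.toIdx : Pos n → Idx n) :=
  fun _ _ h => Subtype.ext (congrArg Subtype.val h :)

@[simp] theorem Pos.toIdx_inj {i j : Pos n} : i.toIdx = j.toIdx ↔ i = j :=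
  Pos.toIdx_injective.eq_iff

@[simp] theorem Pos.neg_toIdx_inj {i j : Pos n} : i.toIdx.neg = j.toIdx.neg ↔ i = j := by
  rw [← Pos.toIdx_inj, Subtype.ext_iff, Subtype.ext_iff]; exact neg_inj

@[simp] theorem Pos.toIdx_ne_neg_toIdx (i j : Pos n) : i.toIdx ≠ j.toIdx.neg := by
  have := (Finset.mem_Icc.mp i.2).1
  have := (Finset.mem_Icc.mp j.2).1
  intro h
  have : i.val = -j.val := congrArg Subtype.val h
  omega

@[simp] theorem Pos.neg_toIdx_ne_toIdx (i j : Pos n) : i.toIdx.neg ≠ j.toIdx :=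
  (Pos.toIdx_ne_neg_toIdx j i).symm

theorem Idx.exists_eq_toIdx_or_eq_neg (a : Idx n) :
    ∃ k : Pos n, a = k.toIdx ∨ a = k.toIdx.neg := by
  have ha := a.2
  simp only [Finset.mem_erase, Finset.mem_Icc] at ha
  refine ⟨⟨|a.val|, Finset.mem_Icc.mpr ⟨abs_pos.mpr ha.1, abs_le.mpr ⟨ha.2.1, ha.2.2⟩⟩⟩, ?_⟩
  rcases abs_choice a.val with h | h
  · exact Or.inl (Subtype.ext h.symm)
  · exact Or.inr (Subtype.ext (by simp [Pos.toIdx, Idx.neg, h]))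

namespace TypeCPoset

variable (P : TypeCPoset n)

theorem lt_neg_neg_iff_s16 {a b : ℤ} : P.lt (-b) (-a) ↔ P.lt a b := by
  suffices h : ∀ a b, P.lt a b → P.lt (-b) (-a) from
    ⟨fun hab => by simpa using h _ _ hab, h a b⟩
  rintro a b ⟨hle, hne⟩
  by_cases hab : a = -b
  · subst hab; rw [neg_neg]; exact ⟨hle, hne⟩
  · exact ⟨(P.nsymm hab).mp hle, by omega⟩

theorem lt_neg_comm_s16 {a b : ℤ} : P.lt (-a) b ↔ P.lt (-b) a := by
  rw [← P.lt_neg_neg_iff_s16, neg_neg]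

theorem exists_lt_neg_iff (x : ℤ) : (∃ y, P.lt (-x) y) ↔ ∃ y, P.lt y x :=
  ⟨fun ⟨y, h⟩ => ⟨-y, P.lt_neg_comm_s16.mp h⟩, fun ⟨y, h⟩ => ⟨-y, P.lt_neg_comm_s16.mpr (by rwa [neg_neg])⟩⟩

open scoped Classical in
noncomputable def weight (x : ℤ) : ℂ :=
  (if ∃ y, P.lt x y then 1 / 2 else 0) - (if ∃ y, P.lt y x then 1 / 2 else 0)

theorem weight_neg (x : ℤ) : P.weight (-x) = -P.weight x := by
  have h := P.exists_lt_neg_iff x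
  have h' := P.exists_lt_neg_iff (-x)
  rw [neg_neg] at h'
  classical
  simp only [weight, h, ← h']
  ring

theorem weight_sub_weight_of_lt (hP : P.HeightOne) {x y : ℤ} (hxy : P.lt x y) :
    P.weight x - P.weight y = 1 := by
  have hx : ¬ ∃ z, P.lt z x := fun ⟨z, hz⟩ => hP z x y hz hxy
  have hy : ¬ ∃ z, P.lt y z := fun ⟨z, hz⟩ => hP x y z hxy hz
  simp only [weight, if_pos (⟨y, hxy⟩ : ∃ z, P.lt x z), if_pos (⟨x, hxy⟩ : ∃ z, P.lt z y),
    hx, hy, if_false]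
  norm_num

theorem diagonal_mem_span_Dmat {δ : Idx n → ℂ} (hδ : ∀ a, δ a.neg = -δ a) :
    diagonal δ ∈ span ℂ (range (Dmat : Pos n → Mat n)) := by
  have hsum : diagonal δ = ∑ k, δ k.toIdx.neg • Dmat k := by
    ext a b
    obtain ⟨k, rfl | rfl⟩ := a.exists_eq_toIdx_or_eq_neg <;>
    obtain ⟨l, rfl | rfl⟩ := b.exists_eq_toIdx_or_eq_neg <;>
    simp [diagonal_apply, Dmat, single_apply, Matrix.sum_apply, ite_and, hδ, neg_ite]
  rw [hsum]
  exact sum_mem fun k _ => smul_mem _ _ (subset_span ⟨k, rfl⟩)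

theorem diagonal_weight_mem_span_Dmat :
    diagonal (fun a : Idx n => P.weight a) ∈ span ℂ (range (Dmat : Pos n → Mat n)) :=
  diagonal_mem_span_Dmat fun a => P.weight_neg a.val

def nilradicalGens : Set (Mat n) :=
  {M | (∃ i j : Pos n, P.lt (-j.val) (-i.val) ∧ M = Rdash i j)
      ∨ (∃ i j : Pos n, P.lt (-i.val) j.val ∧ P.lt (-j.val) i.val ∧ M = Rpm i j)
      ∨ (∃ i : Pos n, P.lt (-i.val) i.val ∧ M = Eloop i)}

theorem gcSet_eq_range_Dmat_union : P.gcSet = range Dmat ∪ P.nilradicalGens := by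
  ext M
  simp only [gcSet, nilradicalGens, mem_ofPred_eq, mem_union, mem_range, eq_comm]

theorem span_nilradicalGens_le_supportedOn :
    span ℂ P.nilradicalGens ≤ supportedOn (P.lt on Subtype.val) := by
  refine span_le.mpr ?_
  rintro _ (⟨i, j, h, rfl⟩ | ⟨i, j, h, h', rfl⟩ | ⟨i, h, rfl⟩)
  · exact sub_mem (single_mem_supportedOn (by exact h) _)
      (single_mem_supportedOn (by exact P.lt_neg_neg_iff_s16.mp h) _)
  · exact add_mem (single_mem_supportedOn (by exact h) _) (single_mem_supportedOn (by exact h') _)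
  · exact single_mem_supportedOn (by exact h) _

theorem lie_eq_zero_of_mem_span_nilradicalGens (hP : P.HeightOne) {a b : Mat n}
    (ha : a ∈ span ℂ P.nilradicalGens) (hb : b ∈ span ℂ P.nilradicalGens) : ⁅a, b⁆ = 0 :=
  lie_eq_zero_of_mem_supportedOn (fun x y z : Idx n => hP x y z)
    (P.span_nilradicalGens_le_supportedOn ha) (P.span_nilradicalGens_le_supportedOn hb)

theorem diagonal_weight_lie_eq_self (hP : P.HeightOne) {a : Mat n}
    (ha : a ∈ span ℂ P.nilradicalGens) : ⁅diagonal (fun x : Idx n => P.weight x), a⁆ = a :=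
  diagonal_lie_eq_self_of_mem_supportedOn (r := P.lt on Subtype.val)
    (fun _ _ h => P.weight_sub_weight_of_lt hP h) (P.span_nilradicalGens_le_supportedOn ha)

noncomputable def edgeCoeff : Mat n →ₗ[ℂ] Sym2 (Pos n) → ℂ where
  toFun M e := ∑ i : Pos n, ∑ j : Pos n,
    if s(i, j) = e then M i.toIdx.neg j.toIdx + M i.toIdx.neg j.toIdx.neg else 0
  map_add' M N := by
    ext e
    simp only [Matrix.add_apply, Pi.add_apply, ← Finset.sum_add_distrib]
    refine Finset.sum_congr rfl fun i _ => Finset.sum_congr rfl fun j _ => ?_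
    split_ifs <;> ring
  map_smul' c M := by
    ext e
    simp only [Matrix.smul_apply, Pi.smul_apply, smul_eq_mul, RingHom.id_apply, Finset.mul_sum]
    refine Finset.sum_congr rfl fun i _ => Finset.sum_congr rfl fun j _ => ?_
    split_ifs <;> ring

theorem edgeCoeff_apply (M : Mat n) (e : Sym2 (Pos n)) :
    edgeCoeff M e = ∑ i : Pos n, ∑ j : Pos n,
      if s(i, j) = e then M i.toIdx.neg j.toIdx + M i.toIdx.neg j.toIdx.neg else 0 :=
  rfl

theorem edgeCoeff_single_neg (k l : Pos n) {b : Idx n} (hb : b = l.toIdx ∨ b = l.toIdx.neg) :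
    edgeCoeff (single k.toIdx.neg b (1 : ℂ)) = Pi.single s(k, l) 1 := by
  ext e
  rw [edgeCoeff_apply, Finset.sum_eq_single k, Finset.sum_eq_single l]
  · rcases hb with rfl | rfl <;> simp [Pi.single_apply, eq_comm]
  · rintro j - hj; rcases hb with rfl | rfl <;> simp [Ne.symm hj]
  · simp
  · rintro i - hi; exact Finset.sum_eq_zero fun j _ => by simp [Ne.symm hi]
  · simp

theorem edgeCoeff_single_pos_pos (k l : Pos n) :
    edgeCoeff (single k.toIdx l.toIdx (1 : ℂ)) = 0 := by
  ext e
  simp [edgeCoeff_apply]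

theorem edgeCoeff_Rpm (i j : Pos n) : edgeCoeff (Rpm i j) = (2 : ℂ) • Pi.single s(i, j) 1 := by
  rw [Rpm, map_add, edgeCoeff_single_neg i j (.inl rfl), edgeCoeff_single_neg j i (.inl rfl),
    Sym2.eq_swap, two_smul]

theorem edgeCoeff_Rdash (i j : Pos n) : edgeCoeff (Rdash i j) = Pi.single s(i, j) 1 := by
  rw [Rdash, map_sub, edgeCoeff_single_neg j i (.inr rfl), edgeCoeff_single_pos_pos, sub_zero,
    Sym2.eq_swap]

theorem edgeCoeff_Eloop (i : Pos n) : edgeCoeff (Eloop i) = Pi.single s(i, i) 1 :=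
  edgeCoeff_single_neg i i (.inl rfl)

def edgeSetWithLoops : Set (Sym2 (Pos n)) :=
  (RG P).edgeSet ∪ Sym2.diag '' {v | P.HasLoopAt v}

theorem single_mem_map_edgeCoeff {e : Sym2 (Pos n)} (he : e ∈ P.edgeSetWithLoops) :
    Pi.single e 1 ∈ (span ℂ P.nilradicalGens).map edgeCoeff := by
  have key : ∀ M ∈ P.nilradicalGens, ∀ c : ℂ, c ≠ 0 → edgeCoeff M = c • Pi.single e 1 →
      Pi.single e 1 ∈ (span ℂ P.nilradicalGens).map edgeCoeff := fun M hM c hc hMc =>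
    ⟨c⁻¹ • M, smul_mem _ _ (subset_span hM),
      by rw [map_smul, hMc, smul_smul, inv_mul_cancel₀ hc, one_smul]⟩
  rcases he with he | ⟨v, hv, rfl⟩
  · induction e using Sym2.ind with | h i j =>
    obtain ⟨-, h | h | h | h⟩ := he
    · exact key _ (.inr (.inl ⟨i, j, h, P.lt_neg_comm_s16.mp h, rfl⟩)) 2 two_ne_zero
        (edgeCoeff_Rpm i j)
    · exact key _ (.inr (.inl ⟨j, i, h, P.lt_neg_comm_s16.mp h, rfl⟩)) 2 two_ne_zero
        (by rw [edgeCoeff_Rpm, Sym2.eq_swap])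
    · exact key _ (.inl ⟨j, i, h, rfl⟩) 1 one_ne_zero
        (by rw [edgeCoeff_Rdash, one_smul, Sym2.eq_swap])
    · exact key _ (.inl ⟨i, j, h, rfl⟩) 1 one_ne_zero (by rw [edgeCoeff_Rdash, one_smul])
  · exact key _ (.inr (.inr ⟨v, hv, rfl⟩)) 1 one_ne_zero (by rw [edgeCoeff_Eloop, one_smul]; rfl)

theorem ncard_edgeSetWithLoops_le_finrank :
    P.edgeSetWithLoops.ncard ≤ finrank ℂ (span ℂ P.nilradicalGens) := by
  have := Fintype.ofFinite P.edgeSetWithLoops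
  let f (e : P.edgeSetWithLoops) : Sym2 (Pos n) → ℂ := Pi.single (e : Sym2 (Pos n)) 1
  have hf : LinearIndependent ℂ f :=
    (Pi.linearIndependent_single_one _ ℂ).comp _ Subtype.val_injective
  calc P.edgeSetWithLoops.ncard = Fintype.card P.edgeSetWithLoops := by
        rw [← Nat.card_coe_set_eq, Nat.card_eq_fintype_card]
    _ = finrank ℂ (span ℂ (range f)) := (finrank_span_eq_card hf).symm
    _ ≤ finrank ℂ ((span ℂ P.nilradicalGens).map edgeCoeff) :=
        Submodule.finrank_mono (span_le.mpr (range_subset_iff.mpr fun e =>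
          P.single_mem_map_edgeCoeff e.2))
    _ ≤ finrank ℂ (span ℂ P.nilradicalGens) := Submodule.finrank_map_le _ _

theorem ncard_edgeSetWithLoops :
    P.edgeSetWithLoops.ncard = (RG P).edgeSet.ncard + {v | P.HasLoopAt v}.ncard := by
  rw [edgeSetWithLoops, ncard_union_eq, ncard_image_of_injective _ Sym2.diag_injective]
  refine disjoint_left.mpr fun e he ⟨v, _, hv⟩ => (RG P).not_isDiag_of_mem_edgeSet he ?_
  exact hv ▸ Sym2.diag_isDiag v

theorem mem_cycleVerts_singleton_diag (v : Pos n) : v ∈ cycleVerts {s(v, v)} :=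
  ⟨s(v, v), Finset.mem_singleton_self _, Sym2.mem_mk_left _ _⟩

variable {P}

theorem card_lt_ncard_edgeSetWithLoops_of_hasLoopAt (hconn : (RG P).Connected) {v : Pos n}
    (hv : P.HasLoopAt v) {t : Finset (Sym2 (Pos n))} (ht : t ∈ P.cycles)
    (hvt : v ∉ cycleVerts t) : Nat.card (Pos n) < P.edgeSetWithLoops.ncard := by
  rw [ncard_edgeSetWithLoops, ← Nat.card_coe_set_eq]
  rcases ht with ⟨w, hw, rfl⟩ | ⟨u, c, hc, rfl⟩
  · have hvw : v ≠ w := by rintro rfl; exact hvt (mem_cycleVerts_singleton_diag v)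
    have hloops : 2 ≤ {v | P.HasLoopAt v}.ncard := by
      rw [← ncard_pair hvw]
      exact ncard_le_ncard (insert_subset hv (singleton_subset_iff.mpr hw))
    have := hconn.card_vert_le_card_edgeSet_add_one
    omega
  · have hloops : 1 ≤ {v | P.HasLoopAt v}.ncard := (ncard_pos (toFinite _)).mpr ⟨v, hv⟩
    have := hconn.card_le_card_edgeSet_of_isCycle hc
    omega

theorem card_lt_ncard_edgeSetWithLoops (hconn : (RG P).Connected)
    {s t : Finset (Sym2 (Pos n))} (hs : s ∈ P.cycles) (ht : t ∈ P.cycles)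
    (hst : Disjoint (cycleVerts s) (cycleVerts t)) :
    Nat.card (Pos n) < P.edgeSetWithLoops.ncard := by
  rcases hs with ⟨v, hv, rfl⟩ | ⟨u, c, hc, rfl⟩
  · exact card_lt_ncard_edgeSetWithLoops_of_hasLoopAt hconn hv ht
      (disjoint_left.mp hst (mem_cycleVerts_singleton_diag v))
  rcases ht with ⟨w, hw, rfl⟩ | ⟨u', c', hc', rfl⟩
  · exact card_lt_ncard_edgeSetWithLoops_of_hasLoopAt hconn hw (.inr ⟨u, c, hc, rfl⟩)
      (disjoint_right.mp hst (mem_cycleVerts_singleton_diag w))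
  have hdisj : ∀ e ∈ c.edges, e ∉ c'.edges := by
    intro e he he'
    induction e using Sym2.ind with | h x y =>
    exact disjoint_left.mp hst ⟨_, List.mem_toFinset.mpr he, Sym2.mem_mk_left x y⟩
      ⟨_, List.mem_toFinset.mpr he', Sym2.mem_mk_left x y⟩
  rw [ncard_edgeSetWithLoops, ← Nat.card_coe_set_eq]
  have := hconn.card_lt_card_edgeSet_of_isCycle_of_isCycle hc hc' hdisj
  omega

theorem card_lt_finrank_span_nilradicalGens (hconn : (RG P).Connected)
    {s t : Finset (Sym2 (Pos n))} (hs : s ∈ P.cycles) (ht : t ∈ P.cycles)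
    (hst : Disjoint (cycleVerts s) (cycleVerts t)) :
    Fintype.card (Pos n) < finrank ℂ (span ℂ P.nilradicalGens) := by
  rw [← Nat.card_eq_fintype_card]
  exact (card_lt_ncard_edgeSetWithLoops hconn hs ht hst).trans_le
    P.ncard_edgeSetWithLoops_le_finrank

end TypeCPoset

open TypeCPoset

/-- **Proposition.** Let `P` be a connected type-C poset of height one.  If `RG(P)`
contains two vertex-disjoint odd cycles, then `g_C(P)` is not contact. -/
theorem not_contact_of_two_disjoint_odd_cycles (n : ℕ) (P : TypeCPoset n)
    (hP : P.HeightOne) (hconn : (TypeCPoset.RG P).Connected)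
    (hcyc : ∃ s t : Finset (Sym2 (Pos n)), s ∈ P.cycles ∧ t ∈ P.cycles ∧
      Odd s.card ∧ Odd t.card ∧
      ∀ v : Pos n, ¬ (v ∈ TypeCPoset.cycleVerts s ∧ v ∈ TypeCPoset.cycleVerts t))
    (g : LieSubalgebra ℂ (Mat n))
    (hg : g.toSubmodule = Submodule.span ℂ (TypeCPoset.gcSet P)) :
    ¬ IsContact ↥g := by
  obtain ⟨s, t, hs, ht, -, -, hst⟩ := hcyc
  have hg' : g.toSubmodule = span ℂ (range Dmat) ⊔ span ℂ P.nilradicalGens := by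
    rw [hg, P.gcSet_eq_range_Dmat_union, span_union]
  have hd : diagonal (fun a : Idx n => P.weight a) ∈ g.toSubmodule :=
    hg' ▸ mem_sup_left P.diagonal_weight_mem_span_Dmat
  exact not_isContact_subalgebra_of_abelian_of_card_lt_finrank g Dmat _ hg'
    (fun _ ha _ hb => P.lie_eq_zero_of_mem_span_nilradicalGens hP ha hb) hd
    (fun _ ha => P.diagonal_weight_lie_eq_self hP ha)
    (card_lt_finrank_span_nilradicalGens hconn hs ht
      (disjoint_left.mpr fun v hvs hvt => hst v ⟨hvs, hvt⟩))

end LiePoset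
end
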